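/- arXiv:0712.2418 — 3 statements merged into one kernel-verified Lean document; each statement's English description precedes it below -/
import Mathlib

section
/- Let a, b, d_1, ..., d_ℓ be indeterminates over ℚ, set d_0 = 1, d_n = 0 for n < 0 or n > ℓ, and define c_k by the power series identity ∑ c_k t^k = ((1-2at)(1-2bt)/((1-at)(1-bt))) · ∑_{i=0}^ℓ d_i t^i. Let e_1 = a+b, e_2 = ab, and let h_n be the complete homogeneous symmetric polynomial in a, b. Then for all integers α ≥ β ≥ γ with β ≥ ℓ+2 and γ ≤ ℓ: s(α,β,γ) = e_2^{β-ℓ-2} · h_{α-β} · s(ℓ+2,ℓ+2) · (d_γ - 2e_1 d_{γ-1} + 4 e_2 d_{γ-2}), where s(i,j,k) = det [[c_i,c_{i+1},c_{i+2}],[c_{j-1},c_j,c_{j+1}],[c_{k-2},c_{k-1},c_k]] and s(i,j) = det [[c_i,c_{i+1}],[c_{j-1},c_j]]. -/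
open PowerSeries Finset

/-- The ring `ℚ[a, b, d_1, …, d_ℓ]`. -/
abbrev R6 (ℓ : ℕ) := MvPolynomial (Sum (Fin 2) (Fin ℓ)) ℚ

noncomputable def va (ℓ : ℕ) : R6 ℓ := MvPolynomial.X (Sum.inl 0)
noncomputable def vb (ℓ : ℕ) : R6 ℓ := MvPolynomial.X (Sum.inl 1)

/-- `d 0 = 1`, `d i` is the variable `d_i` for `1 ≤ i ≤ ℓ`, and `d i = 0` otherwise. -/
noncomputable def dV (ℓ : ℕ) (i : ℤ) : R6 ℓ :=
  if i = 0 then 1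
  else if h : 1 ≤ i ∧ i ≤ (ℓ : ℤ) then
    MvPolynomial.X (Sum.inr ⟨(i - 1).toNat, by omega⟩) else 0

/-- Complete homogeneous symmetric polynomial `h_n` in `a`, `b`. -/
noncomputable def hh (ℓ : ℕ) (n : ℕ) : R6 ℓ :=
  ∑ i ∈ Finset.range (n + 1), va ℓ ^ i * vb ℓ ^ (n - i)

/-- The 3×3 Schur determinant `s(i,j,k)`. -/
noncomputable def s3 (ℓ : ℕ) (c : ℤ → R6 ℓ) (i j k : ℤ) : R6 ℓ :=
  Matrix.det !![c i, c (i+1), c (i+2); c (j-1), c j, c (j+1); c (k-2), c (k-1), c k]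

/-- The 2×2 Schur determinant `s(i,j)`. -/
noncomputable def s2 (ℓ : ℕ) (c : ℤ → R6 ℓ) (i j : ℤ) : R6 ℓ :=
  Matrix.det !![c i, c (i+1); c (j-1), c j]

/-!
Comparing coefficients in the defining identity gives `c_m - e₁ c_{m-1} + e₂ c_{m-2} = D_m`
with `D_m = d_m - 2 e₁ d_{m-1} + 4 e₂ d_{m-2}`, which vanishes for `m > ℓ + 2`: above `ℓ + 2`
the sequence `c` satisfies the homogeneous recurrence with characteristic roots `a`, `b`.
Subtracting `e₁ · col₂ - e₂ · col₁` from the third column of `s(α,β,γ)` then kills its first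
two entries and turns the last one into `D_γ`, so `s(α,β,γ) = s(α,β) D_γ`. As a function of
`α`, `s(α,β)` satisfies the same recurrence as `h_{α-β}` and vanishes at `α = β - 1`, so
`s(α,β) = h_{α-β} s(β,β)`; finally the Casoratian `s(β,β)` gains a factor `e₂` at each step.
-/

section PowerSeries

variable {R : Type*} [CommRing R] {u v : ℤ → R}

theorem X_pow_mul_mk_of_neg (hu : ∀ n < 0, u n = 0) (k : ℕ) :
    X ^ k * PowerSeries.mk (fun n : ℕ => u n) = PowerSeries.mk fun n : ℕ => u (n - k) := by
  ext n : 1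
  rw [coeff_X_pow_mul', coeff_mk, coeff_mk]
  split_ifs with hkn
  · push_cast [hkn]
    rfl
  · rw [hu _ (by omega)]

theorem quadratic_mul_mk_of_neg (hu : ∀ n < 0, u n = 0) (a b : R) :
    (1 - C a * X) * (1 - C b * X) * PowerSeries.mk (fun n : ℕ => u n)
      = PowerSeries.mk fun n : ℕ => u n - (a + b) * u (n - 1) + a * b * u (n - 2) := by
  calc _ = PowerSeries.mk (fun n : ℕ => u n)
          - C (a + b) * (X ^ 1 * PowerSeries.mk fun n : ℕ => u n)
          + C (a * b) * (X ^ 2 * PowerSeries.mk fun n : ℕ => u n) := by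
        simp only [map_add, map_mul]
        ring
    _ = _ := by
        rw [X_pow_mul_mk_of_neg hu, X_pow_mul_mk_of_neg hu]
        ext n : 1
        simp [add_mul, mul_assoc, coeff_C_mul]

theorem quadratic_rec_eq_of_mul_mk_eq (hu : ∀ n < 0, u n = 0) (hv : ∀ n < 0, v n = 0)
    {a b a' b' : R}
    (h : (1 - C a * X) * (1 - C b * X) * PowerSeries.mk (fun n : ℕ => u n)
      = (1 - C a' * X) * (1 - C b' * X) * PowerSeries.mk (fun n : ℕ => v n)) (m : ℤ) :
    u m - (a + b) * u (m - 1) + a * b * u (m - 2)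
      = v m - (a' + b') * v (m - 1) + a' * b' * v (m - 2) := by
  rcases lt_or_ge m 0 with hm | hm
  · simp [hu m hm, hu (m - 1) (by omega), hu (m - 2) (by omega),
      hv m hm, hv (m - 1) (by omega), hv (m - 2) (by omega)]
  · lift m to ℕ using hm
    rw [quadratic_mul_mk_of_neg hu, quadratic_mul_mk_of_neg hv] at h
    simpa using congrArg (coeff m) h

end PowerSeries

section

variable {ℓ : ℕ}

theorem dV_of_neg {m : ℤ} (hm : m < 0) : dV ℓ m = 0 := by
  rw [dV, if_neg (by omega), dif_neg (by omega)]

theorem dV_of_gt {m : ℤ} (hm : (ℓ : ℤ) < m) : dV ℓ m = 0 := by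
  rw [dV, if_neg (by omega), dif_neg (by omega)]

theorem sum_range_C_dV_mul_X_pow :
    ∑ i ∈ range (ℓ + 1), C (dV ℓ i) * X ^ i = PowerSeries.mk fun n : ℕ => dV ℓ n := by
  ext n : 1
  simp only [map_sum, coeff_C_mul, coeff_X_pow, coeff_mk, mul_ite, mul_one, mul_zero, sum_ite_eq,
    mem_range]
  split_ifs with hn
  · rfl
  · rw [dV_of_gt (by omega)]

theorem hh_zero : hh ℓ 0 = 1 := by
  simp [hh]

theorem hh_succ (n : ℕ) : hh ℓ (n + 1) = va ℓ ^ (n + 1) + vb ℓ * hh ℓ n := by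
  simpa [hh] using geom_sum₂_succ_eq (va ℓ) (vb ℓ) (n := n + 1)

theorem hh_add_two (n : ℕ) :
    hh ℓ (n + 2) = (va ℓ + vb ℓ) * hh ℓ (n + 1) - va ℓ * vb ℓ * hh ℓ n := by
  rw [hh_succ (n + 1), hh_succ n]
  ring

theorem eq_hh_mul_of_rec {u : ℕ → R6 ℓ} (h0 : u 0 = 0)
    (hu : ∀ n, u (n + 2) = (va ℓ + vb ℓ) * u (n + 1) - va ℓ * vb ℓ * u n) (n : ℕ) :
    u (n + 1) = hh ℓ n * u 1 := by
  induction n using Nat.twoStepInduction with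
  | zero => rw [hh_zero, one_mul]
  | one => rw [hu 0, h0, hh_succ, hh_zero]; ring
  | more n ih₀ ih₁ => rw [hu (n + 1), ih₀, ih₁, hh_add_two]; ring

end

section SchurDeterminants

variable {ℓ : ℕ} {c : ℤ → R6 ℓ} {N : ℤ}

def RecurrentAbove (N : ℤ) (c : ℤ → R6 ℓ) : Prop :=
  ∀ m, N < m → c m = (va ℓ + vb ℓ) * c (m - 1) - va ℓ * vb ℓ * c (m - 2)

theorem s3_eq (α β γ : ℤ) :
    s3 ℓ c α β γ = c α * c β * c γ - c α * c (β + 1) * c (γ - 1)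
      - c (α + 1) * c (β - 1) * c γ + c (α + 1) * c (β + 1) * c (γ - 2)
      + c (α + 2) * c (β - 1) * c (γ - 1)
      - c (α + 2) * c β * c (γ - 2) := by
  simp [s3, Matrix.det_fin_three]

theorem s3_eq_s2_mul (hrec : RecurrentAbove N c) {α β : ℤ} (hα : N < α + 2) (hβ : N ≤ β)
    (γ : ℤ) :
    s3 ℓ c α β γ = s2 ℓ c α β * (c γ - (va ℓ + vb ℓ) * c (γ - 1) + va ℓ * vb ℓ * c (γ - 2)) := by
  have hα' := hrec (α + 2) hα
  have hβ' := hrec (β + 1) (by omega)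
  rw [show α + 2 - 1 = α + 1 by ring, show α + 2 - 2 = α by ring] at hα'
  rw [show β + 1 - 1 = β by ring, show β + 1 - 2 = β - 1 by ring] at hβ'
  rw [s3_eq, s2, Matrix.det_fin_two_of]
  linear_combination (c (β - 1) * c (γ - 1) - c β * c (γ - 2)) * hα'
    - (c α * c (γ - 1) - c (α + 1) * c (γ - 2)) * hβ'

theorem s2_sub_one_self (β : ℤ) : s2 ℓ c (β - 1) β = 0 := by
  rw [s2, Matrix.det_fin_two_of, sub_add_cancel]
  ring

theorem s2_add_two (hrec : RecurrentAbove N c) {α : ℤ} (hα : N < α + 2) (β : ℤ) :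
    s2 ℓ c (α + 2) β
      = (va ℓ + vb ℓ) * s2 ℓ c (α + 1) β - va ℓ * vb ℓ * s2 ℓ c α β := by
  have h₂ := hrec (α + 2) hα
  have h₃ := hrec (α + 2 + 1) (by omega)
  rw [show α + 2 - 1 = α + 1 by ring, show α + 2 - 2 = α by ring] at h₂
  rw [show α + 2 + 1 - 1 = α + 2 by ring, show α + 2 + 1 - 2 = α + 1 by ring] at h₃
  simp only [s2, Matrix.det_fin_two_of, show α + 1 + 1 = α + 2 by ring]
  linear_combination c β * h₂ - c (β - 1) * h₃

theorem s2_add_self (hrec : RecurrentAbove N c) {β : ℤ} (hβ : N ≤ β) (m : ℕ) :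
    s2 ℓ c (β + m) β = hh ℓ m * s2 ℓ c β β := by
  have hu := eq_hh_mul_of_rec (u := fun n : ℕ => s2 ℓ c (β - 1 + n) β)
    (by simpa using s2_sub_one_self β) (fun n => by
      simpa [add_assoc, one_add_one_eq_two]
        using s2_add_two hrec (α := β - 1 + n) (by omega) β) m
  simpa using hu

theorem s2_succ_self (hrec : RecurrentAbove N c) {β : ℤ} (hβ : N ≤ β) :
    s2 ℓ c (β + 1) (β + 1) = va ℓ * vb ℓ * s2 ℓ c β β := by
  have h₁ := hrec (β + 1) (by omega)
  have h₂ := hrec (β + 2) (by omega)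
  rw [show β + 1 - 1 = β by ring, show β + 1 - 2 = β - 1 by ring] at h₁
  rw [show β + 2 - 1 = β + 1 by ring, show β + 2 - 2 = β by ring] at h₂
  simp only [s2, Matrix.det_fin_two_of, show β + 1 + 1 = β + 2 by ring, add_sub_cancel_right]
  linear_combination c (β + 1) * h₁ - c β * h₂

theorem s2_add_self_add (hrec : RecurrentAbove N c) (k : ℕ) :
    s2 ℓ c (N + k) (N + k) = (va ℓ * vb ℓ) ^ k * s2 ℓ c N N := by
  induction k with
  | zero => simp
  | succ k ih =>
    rw [Nat.cast_succ, ← add_assoc, s2_succ_self hrec (by omega), ih, pow_succ]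
    ring

end SchurDeterminants

theorem I22_factorization (ℓ : ℕ) (c : ℤ → R6 ℓ)
    (hcneg : ∀ n : ℤ, n < 0 → c n = 0)
    (hc : (1 - PowerSeries.C (R := R6 ℓ) (va ℓ) * PowerSeries.X) *
          (1 - PowerSeries.C (R := R6 ℓ) (vb ℓ) * PowerSeries.X) *
          PowerSeries.mk (fun n : ℕ => c n)
        = (1 - PowerSeries.C (R := R6 ℓ) (2 * va ℓ) * PowerSeries.X) *
          (1 - PowerSeries.C (R := R6 ℓ) (2 * vb ℓ) * PowerSeries.X) *
          ∑ i ∈ Finset.range (ℓ + 1),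
            PowerSeries.C (R := R6 ℓ) (dV ℓ i) * PowerSeries.X ^ i) :
    ∀ α β γ : ℤ, β ≤ α → γ ≤ β → (ℓ : ℤ) + 2 ≤ β → γ ≤ (ℓ : ℤ) →
      s3 ℓ c α β γ
        = (va ℓ * vb ℓ) ^ (β - ℓ - 2).toNat * hh ℓ (α - β).toNat *
            s2 ℓ c ((ℓ : ℤ) + 2) ((ℓ : ℤ) + 2) *
            (dV ℓ γ - 2 * (va ℓ + vb ℓ) * dV ℓ (γ - 1)
              + 4 * (va ℓ * vb ℓ) * dV ℓ (γ - 2)) := by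
  rw [sum_range_C_dV_mul_X_pow] at hc
  have hD := quadratic_rec_eq_of_mul_mk_eq hcneg (fun _ => dV_of_neg) hc
  have hrec : RecurrentAbove (ℓ + 2) c := fun m hm => by
    linear_combination hD m + dV_of_gt (ℓ := ℓ) (m := m) (by omega)
      - (2 * va ℓ + 2 * vb ℓ) * dV_of_gt (ℓ := ℓ) (m := m - 1) (by omega)
      + 2 * va ℓ * (2 * vb ℓ) * dV_of_gt (ℓ := ℓ) (m := m - 2) (by omega)
  intro α β γ hβα _ hβ _
  obtain ⟨m, rfl⟩ : ∃ m : ℕ, α = β + m := ⟨(α - β).toNat, by omega⟩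
  obtain ⟨k, rfl⟩ : ∃ k : ℕ, β = ℓ + 2 + k := ⟨(β - ℓ - 2).toNat, by omega⟩
  rw [s3_eq_s2_mul hrec (by omega) hβ, s2_add_self hrec hβ,
    s2_add_self_add hrec, hD, show (ℓ + 2 + k + m - (ℓ + 2 + k) : ℤ).toNat = m by omega,
    show (ℓ + 2 + k - ℓ - 2 : ℤ).toNat = k by omega]
  ring
end

section
/- With notation as in the I_{2,2} factorization lemma, the sum ∑_{j=1}^{∞} 2^{j+1} · s(ℓ+1+j, ℓ+2, ℓ+1-j) equals 4·d_ℓ·s(ℓ+2,ℓ+2) when the c_k are given by ∑ c_k t^k = ((1-2at)(1-2bt)/((1-at)(1-bt)))·∑_{i=0}^ℓ d_i t^i. -/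
/-!
Put `e₁ = a + b`, `e₂ = ab` and let `D(t) = (1 - 2at)(1 - 2bt) d(t)`. The hypothesis says
`c_n - e₁ c_{n-1} + e₂ c_{n-2} = D_n`, so `c` satisfies the homogeneous recurrence above
degree `ℓ + 2`. In `s(ℓ+2+j, ℓ+2, ℓ-j)` the column operation `C₃ - e₁ C₂ + e₂ C₁` leaves the
last column `(0, 0, D_{ℓ-j})`, and the complementary 2×2 minor satisfies the recurrence in `j`,
so `s(ℓ+2+j, ℓ+2, ℓ-j) = h_j(a, b) s(ℓ+2, ℓ+2) D_{ℓ-j}`. Since `2^j h_j(a, b) = h_j(2a, 2b)` and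
`∑ h_j(2a, 2b) t^j = 1 / ((1 - 2at)(1 - 2bt))`, the sum is `4 s(ℓ+2, ℓ+2)` times the coefficient
of `t^ℓ` in `d(t)`.
-/

open PowerSeries Finset

section Quadratic

variable {R : Type*} [CommRing R] (p q : R)

def quadConv (f : ℤ → R) (n : ℤ) : R :=
  f n - (p + q) * f (n - 1) + p * q * f (n - 2)

lemma one_sub_C_mul_X_mul_one_sub_C_mul_X :
    ((1 - C p * X) * (1 - C q * X) : R⟦X⟧) = 1 - C (p + q) * X + C (p * q) * X ^ 2 := by
  simp only [map_add, map_mul]; ring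

lemma coeff_zero_quadratic_mul (F : R⟦X⟧) :
    coeff 0 ((1 - C p * X) * (1 - C q * X) * F) = coeff 0 F := by
  simp

lemma coeff_one_quadratic_mul (F : R⟦X⟧) :
    coeff 1 ((1 - C p * X) * (1 - C q * X) * F) = coeff 1 F - (p + q) * coeff 0 F := by
  rw [one_sub_C_mul_X_mul_one_sub_C_mul_X]
  simp [add_mul, sub_mul, mul_assoc, coeff_X_pow_mul']

lemma coeff_add_two_quadratic_mul (F : R⟦X⟧) (n : ℕ) :
    coeff (n + 2) ((1 - C p * X) * (1 - C q * X) * F)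
      = coeff (n + 2) F - (p + q) * coeff (n + 1) F + p * q * coeff n F := by
  rw [one_sub_C_mul_X_mul_one_sub_C_mul_X]
  simp [add_mul, sub_mul, mul_assoc, coeff_X_pow_mul', coeff_succ_X_mul]

lemma coeff_quadratic_mul_mk {f : ℤ → R} (hf : ∀ n < 0, f n = 0) (n : ℕ) :
    coeff n ((1 - C p * X) * (1 - C q * X) * PowerSeries.mk fun m : ℕ => f m)
      = quadConv p q f n := by
  rcases n with _ | _ | n
  · rw [coeff_zero_quadratic_mul]; simp [quadConv, hf (-1), hf (-2)]
  · rw [coeff_one_quadratic_mul]; simp [quadConv, hf (-1)]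
  · rw [coeff_add_two_quadratic_mul, quadConv]
    simp only [coeff_mk]
    push_cast
    ring_nf

lemma quadConv_of_neg {f : ℤ → R} (hf : ∀ n < 0, f n = 0) {n : ℤ} (hn : n < 0) :
    quadConv p q f n = 0 := by
  rw [quadConv, hf n hn, hf (n - 1) (by omega), hf (n - 2) (by omega)]
  ring

/-- `hsymm₂ p q n = ∑_{i + j = n} p ^ i * q ^ j`, the complete homogeneous symmetric polynomial. -/
def hsymm₂ : ℕ → R
  | 0 => 1
  | 1 => p + q
  | n + 2 => (p + q) * hsymm₂ (n + 1) - p * q * hsymm₂ n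

lemma mk_hsymm₂_mul_quadratic :
    PowerSeries.mk (hsymm₂ p q) * ((1 - C p * X) * (1 - C q * X)) = 1 := by
  ext (_ | _ | n)
  · rw [mul_comm, coeff_zero_quadratic_mul]; simp [hsymm₂]
  · rw [mul_comm, coeff_one_quadratic_mul]; simp [hsymm₂]
  · rw [mul_comm, coeff_add_two_quadratic_mul]; simp [hsymm₂]

lemma pow_mul_hsymm₂ (r : R) (n : ℕ) : r ^ n * hsymm₂ p q n = hsymm₂ (r * p) (r * q) n := by
  induction n using Nat.twoStepInduction with
  | zero => simp [hsymm₂]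
  | one => simp only [hsymm₂, pow_one]; ring
  | more n ih₀ ih₁ => simp only [hsymm₂, ← ih₀, ← ih₁]; ring

lemma eq_hsymm₂_mul_of_rec {G : ℕ → R} (h₁ : G 1 = (p + q) * G 0)
    (hrec : ∀ n, G (n + 2) = (p + q) * G (n + 1) - p * q * G n) (n : ℕ) :
    G n = hsymm₂ p q n * G 0 := by
  induction n using Nat.twoStepInduction with
  | zero => simp [hsymm₂]
  | one => rw [h₁, hsymm₂]
  | more n ih₀ ih₁ => rw [hrec, ih₀, ih₁, hsymm₂]; ring

lemma sum_hsymm₂_mul_quadConv {f : ℤ → R} (hf : ∀ n < 0, f n = 0) (m : ℕ) :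
    ∑ k ∈ range (m + 1), hsymm₂ p q k * quadConv p q f ((m : ℤ) - k) = f m := by
  have h := congrArg (fun F => coeff m (F * PowerSeries.mk fun n : ℕ => f n))
    (mk_hsymm₂_mul_quadratic p q)
  rw [one_mul, coeff_mk, mul_assoc, coeff_mul] at h
  rw [← h, Finset.Nat.sum_antidiagonal_eq_sum_range_succ_mk]
  refine sum_congr rfl fun k hk => ?_
  rw [coeff_mk, coeff_quadratic_mul_mk p q hf, Nat.cast_sub (by simpa [Nat.lt_succ_iff] using hk)]

end Quadratic

lemma Matrix.det_fin_three_of_col_rec {R : Type*} [CommRing R] (e₁ e₂ x₀ x₁ y₀ y₁ z₀ z₁ z₂ : R) :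
    !![x₀, x₁, e₁ * x₁ - e₂ * x₀; y₀, y₁, e₁ * y₁ - e₂ * y₀; z₀, z₁, z₂].det
      = (z₂ - e₁ * z₁ + e₂ * z₀) * (x₀ * y₁ - x₁ * y₀) := by
  rw [Matrix.det_fin_three]
  simp only [Matrix.of_apply, Matrix.cons_val', Matrix.cons_val_zero, Matrix.cons_val_fin_one,
    Matrix.cons_val_one, Matrix.cons_val]
  ring

section Schur

variable {ℓ : ℕ} {c : ℤ → R6 ℓ} {p q : R6 ℓ} {m : ℤ}

lemma minor_eq_hsymm₂_mul_s2 (hc : ∀ n > m, quadConv p q c n = 0) (j : ℕ) :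
    c (m + j) * c m - c (m + j + 1) * c (m - 1) = hsymm₂ p q j * s2 ℓ c m m := by
  unfold quadConv at hc
  refine (eq_hsymm₂_mul_of_rec p q
    (G := fun j : ℕ => c (m + j) * c m - c (m + j + 1) * c (m - 1)) ?_ (fun n => ?_) j).trans ?_
  · linear_combination (norm := ring_nf)
      c m * hc (m + 1) (by omega) - c (m - 1) * hc (m + 2) (by omega)
  · push_cast
    linear_combination (norm := ring_nf)
      c m * hc (m + n + 2) (by omega) - c (m - 1) * hc (m + n + 3) (by omega)
  · rw [s2, Matrix.det_fin_two_of]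
    simp

lemma s3_eq_hsymm₂_mul (hc : ∀ n > m, quadConv p q c n = 0) (j : ℕ) :
    s3 ℓ c (m + j) m (m - 2 - j) = hsymm₂ p q j * s2 ℓ c m m * quadConv p q c (m - 2 - j) := by
  rw [← minor_eq_hsymm₂_mul_s2 hc]
  unfold quadConv at hc ⊢
  have h₁ : c (m + j + 2) = (p + q) * c (m + j + 1) - p * q * c (m + j) := by
    linear_combination (norm := ring_nf) hc (m + j + 2) (by omega)
  have h₂ : c (m + 1) = (p + q) * c m - p * q * c (m - 1) := by
    linear_combination (norm := ring_nf) hc (m + 1) (by omega)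
  rw [s3, h₁, h₂, Matrix.det_fin_three_of_col_rec]
  ring

end Schur

lemma sum_range_C_mul_X_pow_eq_mk {R : Type*} [Semiring R] {f : ℕ → R} {N : ℕ}
    (hf : ∀ n, N < n → f n = 0) : ∑ i ∈ range (N + 1), C (f i) * X ^ i = PowerSeries.mk f := by
  ext n
  simp only [map_sum, coeff_C_mul_X_pow, coeff_mk, sum_ite_eq, mem_range]
  split_ifs with h
  · rfl
  · exact (hf n (by omega)).symm

lemma dV_of_neg_s7 (ℓ : ℕ) {n : ℤ} (h : n < 0) : dV ℓ n = 0 := by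
  rw [dV, if_neg (by omega), dif_neg (by omega)]

lemma dV_of_lt (ℓ : ℕ) {n : ℤ} (h : (ℓ : ℤ) < n) : dV ℓ n = 0 := by
  rw [dV, if_neg (by omega), dif_neg (by omega)]

/-- The sum `∑_{j≥1} 2^{j+1} s(ℓ+1+j, ℓ+2, ℓ+1-j)`; its terms vanish for `j > ℓ+1`,
so it equals the finite sum over `1 ≤ j ≤ ℓ+1`. -/
theorem I22_residue_sum (ℓ : ℕ) (c : ℤ → R6 ℓ)
    (hcneg : ∀ n : ℤ, n < 0 → c n = 0)
    (hc : (1 - PowerSeries.C (R := R6 ℓ) (va ℓ) * PowerSeries.X) *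
          (1 - PowerSeries.C (R := R6 ℓ) (vb ℓ) * PowerSeries.X) *
          PowerSeries.mk (fun n : ℕ => c n)
        = (1 - PowerSeries.C (R := R6 ℓ) (2 * va ℓ) * PowerSeries.X) *
          (1 - PowerSeries.C (R := R6 ℓ) (2 * vb ℓ) * PowerSeries.X) *
          ∑ i ∈ Finset.range (ℓ + 1),
            PowerSeries.C (R := R6 ℓ) (dV ℓ i) * PowerSeries.X ^ i) :
    ∑ j ∈ Finset.Icc 1 (ℓ + 1),
        (2 : R6 ℓ) ^ (j + 1) * s3 ℓ c ((ℓ : ℤ) + 1 + j) ((ℓ : ℤ) + 2) ((ℓ : ℤ) + 1 - j)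
      = 4 * dV ℓ ℓ * s2 ℓ c ((ℓ : ℤ) + 2) ((ℓ : ℤ) + 2) := by
  rw [sum_range_C_mul_X_pow_eq_mk (f := fun n : ℕ => dV ℓ n) fun n hn => dV_of_lt ℓ (by omega)]
    at hc
  have hconv (n : ℤ) : quadConv (va ℓ) (vb ℓ) c n = quadConv (2 * va ℓ) (2 * vb ℓ) (dV ℓ) n := by
    rcases lt_or_ge n 0 with hn | hn
    · rw [quadConv_of_neg _ _ hcneg hn, quadConv_of_neg _ _ (fun _ => dV_of_neg_s7 ℓ) hn]
    · lift n to ℕ using hn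
      rw [← coeff_quadratic_mul_mk _ _ hcneg, hc, coeff_quadratic_mul_mk _ _ fun _ => dV_of_neg_s7 ℓ]
  have hvanish : ∀ n > (ℓ : ℤ) + 2, quadConv (va ℓ) (vb ℓ) c n = 0 := fun n hn => by
    rw [hconv, quadConv, dV_of_lt ℓ (by omega), dV_of_lt ℓ (by omega), dV_of_lt ℓ (by omega)]
    ring
  rw [← Finset.Ico_add_one_right_eq_Icc, sum_Ico_eq_sum_range, show ℓ + 1 + 1 - 1 = ℓ + 1 from rfl]
  calc _ = 4 * s2 ℓ c ((ℓ : ℤ) + 2) ((ℓ : ℤ) + 2) * ∑ k ∈ range (ℓ + 1),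
        hsymm₂ (2 * va ℓ) (2 * vb ℓ) k * quadConv (2 * va ℓ) (2 * vb ℓ) (dV ℓ) ((ℓ : ℤ) - k) := by
        rw [mul_sum]
        refine sum_congr rfl fun k _ => ?_
        rw [show (ℓ : ℤ) + 1 + ↑(1 + k) = ℓ + 2 + k by push_cast; ring,
          show (ℓ : ℤ) + 1 - ↑(1 + k) = ℓ + 2 - 2 - k by push_cast; ring,
          s3_eq_hsymm₂_mul hvanish, show (ℓ : ℤ) + 2 - 2 - k = ℓ - k by ring, hconv,
          ← pow_mul_hsymm₂, show 1 + k + 1 = k + 2 by ring]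
        ring
    _ = _ := by rw [sum_hsymm₂_mul_quadConv _ _ fun _ => dV_of_neg_s7 ℓ]; ring
end

section
/- Let α, b_1, ..., b_ℓ be indeterminates and define c_k (1 ≤ k ≤ ℓ+1) by ∑_k c_k t^k + 1 = ((1+2αt)·∏_{i=1}^ℓ(1+β_i t))/(1+αt), where b_i is the i-th elementary symmetric polynomial of β_1,...,β_ℓ. Then c_{ℓ+1} = α·∏_{i=1}^ℓ(β_i - α). -/
open PowerSeries Finset

/-- The ring `ℚ[α, β_1, …, β_ℓ]`. -/
abbrev R8 (ℓ : ℕ) := MvPolynomial (Option (Fin ℓ)) ℚ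

noncomputable def al (ℓ : ℕ) : R8 ℓ := MvPolynomial.X none
noncomputable def be (ℓ : ℕ) (i : Fin ℓ) : R8 ℓ := MvPolynomial.X (some i)

/-!
Absorb the factor `1 + 2αt` into the product by indexing over `Option (Fin ℓ)`, with
`β_none = 2α`. For any `b_1, …, b_m`, the coefficient of `t^(m+k)` in `∏ (1 + b_i t) / (1 + αt)`
is `(-α)^k ∏ (b_i - α)`: multiplying by one more factor `1 + bt = (1 + αt) + (b - α)t`
contributes the factor `b - α`. Taking `m = ℓ + 1`, `k = 0` gives `(2α - α) ∏ (β_i - α)`.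
-/

section

variable {A : Type*} [CommRing A]

theorem PowerSeries.mk_neg_pow_mul_one_add_C_mul_X (a : A) :
    mk (fun n => (-a) ^ n) * (1 + C a * X) = 1 := by
  have h := congrArg (rescale (-a)) (mk_one_mul_one_sub_eq_one (S := A))
  simpa [rescale_mk, rescale_X, sub_eq_add_neg] using h

theorem PowerSeries.coeff_succ_one_add_C_mul_X_mul (b : A) (f : A⟦X⟧) (n : ℕ) :
    coeff (n + 1) ((1 + C b * X) * f) = coeff (n + 1) f + b * coeff n f := by
  rw [add_mul, one_mul, mul_assoc, map_add, coeff_C_mul, coeff_succ_X_mul]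

theorem PowerSeries.coeff_card_add_prod_one_add_C_mul_X_mul_mk_neg_pow
    {ι : Type*} [DecidableEq ι] (s : Finset ι) (b : ι → A) (a : A) (k : ℕ) :
    coeff (#s + k) ((∏ i ∈ s, (1 + C (b i) * X)) * mk (fun n => (-a) ^ n)) =
      (-a) ^ k * ∏ i ∈ s, (b i - a) := by
  induction s using Finset.induction_on generalizing k with
  | empty => simp
  | insert j s hj ih =>
    rw [prod_insert hj, prod_insert hj, card_insert_of_notMem hj, mul_assoc,
      show #s + 1 + k = #s + k + 1 by omega, coeff_succ_one_add_C_mul_X_mul,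
      show #s + k + 1 = #s + (k + 1) by omega, ih, ih]
    ring

end

theorem A1_top_chern_class_general (ℓ : ℕ) (c : ℕ → R8 ℓ)
    (hc : PowerSeries.mk c * (1 + PowerSeries.C (R := R8 ℓ) (al ℓ) * PowerSeries.X)
        = (1 + PowerSeries.C (R := R8 ℓ) (2 * al ℓ) * PowerSeries.X) *
          ∏ i : Fin ℓ, (1 + PowerSeries.C (R := R8 ℓ) (be ℓ i) * PowerSeries.X)) :
    c (ℓ + 1) = al ℓ * ∏ i : Fin ℓ, (be ℓ i - al ℓ) := by
  let b : Option (Fin ℓ) → R8 ℓ := fun i => i.elim (2 * al ℓ) (be ℓ)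
  have hmk : mk c = (∏ i, (1 + C (b i) * X)) * mk (fun n => (-al ℓ) ^ n) := by
    rw [Fintype.prod_option]
    simp only [b, Option.elim_none, Option.elim_some]
    rw [← hc, mul_assoc, mul_comm (1 + C _ * X), mk_neg_pow_mul_one_add_C_mul_X, mul_one]
  calc c (ℓ + 1) = coeff (#(univ : Finset (Option (Fin ℓ))) + 0) (mk c) := by simp
    _ = (2 * al ℓ - al ℓ) * ∏ i : Fin ℓ, (be ℓ i - al ℓ) := by
      rw [hmk, coeff_card_add_prod_one_add_C_mul_X_mul_mk_neg_pow, pow_zero, one_mul,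
        Fintype.prod_option]
      rfl
    _ = al ℓ * ∏ i : Fin ℓ, (be ℓ i - al ℓ) := by ring

theorem A1_top_chern_class (ℓ : ℕ) (c : ℕ → R8 ℓ) (hc0 : c 0 = 1)
    (hc : PowerSeries.mk c * (1 + PowerSeries.C (R := R8 ℓ) (al ℓ) * PowerSeries.X)
        = (1 + PowerSeries.C (R := R8 ℓ) (2 * al ℓ) * PowerSeries.X) *
          ∏ i : Fin ℓ, (1 + PowerSeries.C (R := R8 ℓ) (be ℓ i) * PowerSeries.X)) :
    c (ℓ + 1) = al ℓ * ∏ i : Fin ℓ, (be ℓ i - al ℓ) :=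
  A1_top_chern_class_general ℓ c hc
end
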